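/- Let g : D → ℝ be defined on a box D = ∏ᵢ Dᵢ ⊆ ℝⁿ with continuous-variable index set C and integer-variable index set I = {1,…,n} \ C (so Dᵢ is a closed real interval for i ∈ C and a set of integers in an interval for i ∈ I). Suppose there exists a rule assigning to every sub-box D̄ ⊆ D a value η(D̄) ≤ inf_{x ∈ D̄} g(x) such that: (a) η(D¹) ≥ η(D²) whenever D¹ ⊆ D² ⊆ D, and (b) for every nested sequence of sub-boxes Dʲ converging in the Hausdorff sense to a singleton {x̄} ⊆ D, lim_{j→∞} η(Dʲ) = g(x̄). Then for every fixed integer part x̄_I with each coordinate in its domain, the restriction x_C ↦ g(x_C, x̄_I) is lower semicontinuous on ∏_{i ∈ C} Dᵢ. -/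
import Mathlib


/-- A convergent lower-bound calculation rule forces lower semicontinuity of the
restriction of `g` to the continuous coordinates. -/
theorem stmt_3 {n : ℕ} (C : Finset (Fin n)) (g : (Fin n → ℝ) → ℝ)
    (L U : Fin n → ℝ) (D : Set (Fin n → ℝ))
    (hD : D = {x | ∀ i, x i ∈ Set.Icc (L i) (U i) ∧ (i ∉ C → ∃ m : ℤ, x i = (m : ℝ))})
    (η : (Fin n → ℝ) → (Fin n → ℝ) → ℝ)
    (hlb : ∀ a b : Fin n → ℝ, (∀ i, L i ≤ a i ∧ b i ≤ U i) →
      ∀ x ∈ D, (∀ i, x i ∈ Set.Icc (a i) (b i)) → η a b ≤ g x)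
    (hcons : ∀ a₁ b₁ a₂ b₂ : Fin n → ℝ, (∀ i, L i ≤ a₂ i ∧ b₂ i ≤ U i) →
      (∀ i, a₂ i ≤ a₁ i ∧ b₁ i ≤ b₂ i) → η a₂ b₂ ≤ η a₁ b₁)
    (hconv : ∀ (a b : ℕ → Fin n → ℝ) (xbar : Fin n → ℝ), xbar ∈ D →
      (∀ j i, L i ≤ a j i ∧ b j i ≤ U i) →
      (∀ j i, a j i ≤ a (j+1) i ∧ b (j+1) i ≤ b j i) →
      (∀ j i, a j i ≤ b j i) →
      (∀ i, Filter.Tendsto (fun j => a j i) Filter.atTop (nhds (xbar i)) ∧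
            Filter.Tendsto (fun j => b j i) Filter.atTop (nhds (xbar i))) →
      Filter.Tendsto (fun j => η (a j) (b j)) Filter.atTop (nhds (g xbar))) :
    ∀ z ∈ D, ∀ ε > 0, ∃ δ > 0, ∀ w ∈ D, (∀ i, i ∉ C → w i = z i) →
      Real.sqrt (∑ i, (w i - z i) ^ 2) < δ → g w > g z - ε := by
  intro z hz ε hε
  have hzD := hz
  rw [hD] at hzD
  have hzL : ∀ i, L i ≤ z i := fun i => (hzD i).1.1
  have hzU : ∀ i, z i ≤ U i := fun i => (hzD i).1.2
  set a : ℕ → Fin n → ℝ := fun j i => max (L i) (z i - (1/2 : ℝ)^j) with ha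
  set b : ℕ → Fin n → ℝ := fun j i => min (U i) (z i + (1/2 : ℝ)^j) with hb
  have hpow : Filter.Tendsto (fun j : ℕ => (1/2 : ℝ)^j) Filter.atTop (nhds 0) :=
    tendsto_pow_atTop_nhds_zero_of_lt_one (by norm_num) (by norm_num)
  have hbounds : ∀ j i, L i ≤ a j i ∧ b j i ≤ U i := fun j i =>
    ⟨le_max_left _ _, min_le_left _ _⟩
  have hpowmono : ∀ j : ℕ, (1/2 : ℝ)^(j+1) ≤ (1/2 : ℝ)^j := fun j =>
    pow_le_pow_of_le_one (by norm_num) (by norm_num) (Nat.le_succ j)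
  have hnest : ∀ j i, a j i ≤ a (j+1) i ∧ b (j+1) i ≤ b j i := by
    intro j i
    constructor
    · exact max_le_max le_rfl (by linarith [hpowmono j])
    · exact min_le_min le_rfl (by linarith [hpowmono j])
  have hab : ∀ j i, a j i ≤ b j i := by
    intro j i
    have hp : (0:ℝ) ≤ (1/2:ℝ)^j := by positivity
    have h1 : a j i ≤ z i := max_le (hzL i) (by linarith)
    have h2 : z i ≤ b j i := le_min (hzU i) (by linarith)
    linarith
  have htend : ∀ i, Filter.Tendsto (fun j => a j i) Filter.atTop (nhds (z i)) ∧
      Filter.Tendsto (fun j => b j i) Filter.atTop (nhds (z i)) := by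
    intro i
    constructor
    · have : Filter.Tendsto (fun j : ℕ => max (L i) (z i - (1/2:ℝ)^j))
          Filter.atTop (nhds (max (L i) (z i))) :=
        Filter.Tendsto.max tendsto_const_nhds (by simpa using tendsto_const_nhds.sub hpow)
      simpa only [max_eq_right (hzL i)] using this
    · have : Filter.Tendsto (fun j : ℕ => min (U i) (z i + (1/2:ℝ)^j))
          Filter.atTop (nhds (min (U i) (z i))) :=
        Filter.Tendsto.min tendsto_const_nhds (by simpa using tendsto_const_nhds.add hpow)
      simpa only [min_eq_right (hzU i)] using this
  have hconvz := hconv a b z hz hbounds hnest hab htend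
  have hev : ∀ᶠ j in Filter.atTop, η (a j) (b j) > g z - ε := by
    have := hconvz (Ioi_mem_nhds (show g z - ε < g z by linarith))
    exact this
  obtain ⟨J, hJ⟩ := hev.exists
  refine ⟨(1/2:ℝ)^J, by positivity, ?_⟩
  intro w hw _ hdist
  have hcoord : ∀ i, |w i - z i| < (1/2:ℝ)^J := by
    intro i
    have h1 : (w i - z i)^2 ≤ ∑ k, (w k - z k)^2 :=
      Finset.single_le_sum (f := fun k => (w k - z k)^2)
        (fun k _ => sq_nonneg _) (Finset.mem_univ i)
    have h2 : |w i - z i| ≤ Real.sqrt (∑ k, (w k - z k)^2) := by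
      rw [← Real.sqrt_sq_eq_abs]
      exact Real.sqrt_le_sqrt h1
    linarith
  have hwbox : ∀ i, w i ∈ Set.Icc (a J i) (b J i) := by
    intro i
    have h := abs_lt.1 (hcoord i)
    have hwD := hw; rw [hD] at hwD
    constructor
    · exact max_le (hwD i).1.1 (by linarith [h.1])
    · exact le_min (hwD i).1.2 (by linarith [h.2])
  have := hlb (a J) (b J) (hbounds J) w hw hwbox
  linarith
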